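/- arXiv:1207.2080 — 2 statements merged into one kernel-verified Lean document; each statement's English description precedes it below -/
import Mathlib

section
/- Projected information is non-negative and bounded by mutual information: 0 ≤ I_pr(X↘Y;Z) ≤ I(Z;X) < ∞, and I_pr(X↘Y;Z) = I(Z;X) − Σ_{x : p(x)>0} p(x) · inf_{q ∈ C_Y} D(p(·|x)‖q). -/
open scoped BigOperators

/-- `p` is a probability mass function on a finite type. -/
def IsPMF {α : Type*} [Fintype α] (p : α → ℝ) : Prop :=
  (∀ a, 0 ≤ p a) ∧ ∑ a, p a = 1

/-- Kullback–Leibler divergence `D(u‖v) = Σ u log (u/v)` (with the convention `0 log 0 = 0`),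
`⊤` if absolute continuity fails, i.e. if `u a > 0 = v a` for some `a`. -/
noncomputable def klDiv {α : Type*} [Fintype α] (u v : α → ℝ) : EReal :=
  if ∀ a, 0 < u a → 0 < v a then ((∑ a, u a * Real.log (u a / v a) : ℝ) : EReal) else ⊤

variable {𝓧 𝓨 𝓩 : Type*} [Fintype 𝓧] [Fintype 𝓨] [Fintype 𝓩]

/-- Marginal distribution of the first variable `X`. -/
noncomputable def margX (p : 𝓧 × 𝓨 × 𝓩 → ℝ) (x : 𝓧) : ℝ := ∑ y, ∑ z, p (x, y, z)

/-- Marginal distribution of the second variable `Y`. -/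
noncomputable def margY (p : 𝓧 × 𝓨 × 𝓩 → ℝ) (y : 𝓨) : ℝ := ∑ x, ∑ z, p (x, y, z)

/-- Marginal distribution of the third variable `Z`. -/
noncomputable def margZ (p : 𝓧 × 𝓨 × 𝓩 → ℝ) (z : 𝓩) : ℝ := ∑ x, ∑ y, p (x, y, z)

/-- Joint marginal `p(x,z)`. -/
noncomputable def margXZ (p : 𝓧 × 𝓨 × 𝓩 → ℝ) (x : 𝓧) (z : 𝓩) : ℝ := ∑ y, p (x, y, z)

/-- Joint marginal `p(y,z)`. -/
noncomputable def margYZ (p : 𝓧 × 𝓨 × 𝓩 → ℝ) (y : 𝓨) (z : 𝓩) : ℝ := ∑ x, p (x, y, z)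

/-- Joint marginal `p(x,y)`. -/
noncomputable def margXY (p : 𝓧 × 𝓨 × 𝓩 → ℝ) (x : 𝓧) (y : 𝓨) : ℝ := ∑ z, p (x, y, z)

/-- Conditional distribution `p(·|x)` of `Z` given `X = x`. -/
noncomputable def condX (p : 𝓧 × 𝓨 × 𝓩 → ℝ) (x : 𝓧) : 𝓩 → ℝ :=
  fun z => margXZ p x z / margX p x

/-- Conditional distribution `p(·|y)` of `Z` given `Y = y`. -/
noncomputable def condY (p : 𝓧 × 𝓨 × 𝓩 → ℝ) (y : 𝓨) : 𝓩 → ℝ :=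
  fun z => margYZ p y z / margY p y

/-- Conditional distribution `p(·|x,y)` of `Z` given `(X,Y) = (x,y)`. -/
noncomputable def condXY (p : 𝓧 × 𝓨 × 𝓩 → ℝ) (x : 𝓧) (y : 𝓨) : 𝓩 → ℝ :=
  fun z => p (x, y, z) / margXY p x y

/-- `C_X`: the convex hull of the conditionals `{p(·|x) : p(x) > 0}`. -/
noncomputable def CXhull (p : 𝓧 × 𝓨 × 𝓩 → ℝ) : Set (𝓩 → ℝ) :=
  convexHull ℝ {q | ∃ x, 0 < margX p x ∧ q = condX p x}

/-- `C_Y`: the convex hull of the conditionals `{p(·|y) : p(y) > 0}`. -/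
noncomputable def CYhull (p : 𝓧 × 𝓨 × 𝓩 → ℝ) : Set (𝓩 → ℝ) :=
  convexHull ℝ {q | ∃ y, 0 < margY p y ∧ q = condY p y}

/-- Mutual information `I(Z;X)` (terms with `p(x,z) = 0` vanish). -/
noncomputable def miZX (p : 𝓧 × 𝓨 × 𝓩 → ℝ) : ℝ :=
  ∑ x, ∑ z, margXZ p x z * Real.log (margXZ p x z / (margX p x * margZ p z))

/-- Mutual information `I(Z;Y)`. -/
noncomputable def miZY (p : 𝓧 × 𝓨 × 𝓩 → ℝ) : ℝ :=
  ∑ y, ∑ z, margYZ p y z * Real.log (margYZ p y z / (margY p y * margZ p z))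

/-- Mutual information `I(Z;X,Y)` between `Z` and the joint variable `(X,Y)`. -/
noncomputable def miZXY (p : 𝓧 × 𝓨 × 𝓩 → ℝ) : ℝ :=
  ∑ x, ∑ y, ∑ z, p (x, y, z) * Real.log (p (x, y, z) / (margXY p x y * margZ p z))

/-- Projected information `I_pr(X ↘ Y; Z) =
`Σ_{x : p(x)>0} p(x)·[D(p(·|x)‖p_Z) − inf_{q ∈ C_Y} D(p(·|x)‖q)]`. -/
noncomputable def IprXY (p : 𝓧 × 𝓨 × 𝓩 → ℝ) : ℝ :=
  ∑ x, if 0 < margX p x then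
      margX p x * ((klDiv (condX p x) (margZ p)).toReal -
        (⨅ q ∈ CYhull p, klDiv (condX p x) q).toReal)
    else 0

/-- Projected information `I_pr(Y ↘ X; Z)`. -/
noncomputable def IprYX (p : 𝓧 × 𝓨 × 𝓩 → ℝ) : ℝ :=
  ∑ y, if 0 < margY p y then
      margY p y * ((klDiv (condY p y) (margZ p)).toReal -
        (⨅ q ∈ CXhull p, klDiv (condY p y) q).toReal)
    else 0

/-- Redundant information `I_red(Z;X,Y) = min {I_pr(X↘Y;Z), I_pr(Y↘X;Z)}`. -/
noncomputable def Ired (p : 𝓧 × 𝓨 × 𝓩 → ℝ) : ℝ := min (IprXY p) (IprYX p)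

section Aux
set_option linter.unusedSectionVars false
variable (p : 𝓧 × 𝓨 × 𝓩 → ℝ) (hp : IsPMF p)
include hp

lemma margX_nonneg (x : 𝓧) : 0 ≤ margX p x :=
  Finset.sum_nonneg fun _ _ => Finset.sum_nonneg fun _ _ => hp.1 _

lemma margY_nonneg (y : 𝓨) : 0 ≤ margY p y :=
  Finset.sum_nonneg fun _ _ => Finset.sum_nonneg fun _ _ => hp.1 _

lemma margXZ_nonneg (x : 𝓧) (z : 𝓩) : 0 ≤ margXZ p x z := Finset.sum_nonneg fun _ _ => hp.1 _

lemma margYZ_nonneg (y : 𝓨) (z : 𝓩) : 0 ≤ margYZ p y z := Finset.sum_nonneg fun _ _ => hp.1 _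

lemma margZ_nonneg (z : 𝓩) : 0 ≤ margZ p z :=
  Finset.sum_nonneg fun _ _ => Finset.sum_nonneg fun _ _ => hp.1 _

omit hp in lemma margX_eq_sum (x : 𝓧) : margX p x = ∑ z, margXZ p x z := by
  simp only [margX, margXZ]; exact Finset.sum_comm

omit hp in lemma margY_eq_sum (y : 𝓨) : margY p y = ∑ z, margYZ p y z := by
  simp only [margY, margYZ]; exact Finset.sum_comm

omit hp in lemma margZ_eq_sumX (z : 𝓩) : margZ p z = ∑ x, margXZ p x z := rfl

omit hp in lemma margZ_eq_sumY (z : 𝓩) : margZ p z = ∑ y, margYZ p y z := by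
  simp only [margZ, margYZ]; exact Finset.sum_comm

lemma sum_margY : ∑ y, margY p y = 1 := by
  have h := hp.2
  rw [Fintype.sum_prod_type] at h
  rw [← h, Finset.sum_comm]
  simp only [margY, Fintype.sum_prod_type]
  exact Finset.sum_congr rfl fun y _ => Finset.sum_comm

lemma margXZ_eq_zero {x : 𝓧} (hx : margX p x = 0) (z : 𝓩) : margXZ p x z = 0 :=
  (Finset.sum_eq_zero_iff_of_nonneg
    (fun z _ => margXZ_nonneg p hp x z)).1 ((margX_eq_sum p x).symm.trans hx) z
    (Finset.mem_univ z)

lemma margYZ_eq_zero {y : 𝓨} (hy : margY p y = 0) (z : 𝓩) : margYZ p y z = 0 :=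
  (Finset.sum_eq_zero_iff_of_nonneg
    (fun z _ => margYZ_nonneg p hp y z)).1 ((margY_eq_sum p y).symm.trans hy) z
    (Finset.mem_univ z)

lemma condX_mem_simplex {x : 𝓧} (hx : 0 < margX p x) : condX p x ∈ stdSimplex ℝ 𝓩 := by
  constructor
  · intro z; exact div_nonneg (margXZ_nonneg p hp x z) hx.le
  · simp only [condX]
    rw [← Finset.sum_div, ← margX_eq_sum, div_self hx.ne']

lemma condY_mem_simplex {y : 𝓨} (hy : 0 < margY p y) : condY p y ∈ stdSimplex ℝ 𝓩 := by
  constructor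
  · intro z; exact div_nonneg (margYZ_nonneg p hp y z) hy.le
  · simp only [condY]
    rw [← Finset.sum_div, ← margY_eq_sum, div_self hy.ne']

lemma CYhull_subset_simplex : CYhull p ⊆ stdSimplex ℝ 𝓩 := by
  apply convexHull_min _ (convex_stdSimplex ℝ 𝓩)
  rintro q ⟨y, hy, rfl⟩
  exact condY_mem_simplex p hp hy

lemma margZ_mem_CYhull : margZ p ∈ CYhull p := by
  classical
  set t : Finset 𝓨 := Finset.univ.filter (fun y => 0 < margY p y) with ht
  have hwsum : ∑ y ∈ t, margY p y = 1 := by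
    rw [ht, Finset.sum_filter_of_ne (fun y _ h => lt_of_le_of_ne (margY_nonneg p hp y) (Ne.symm h))]
    exact sum_margY p hp
  have hws : (0:ℝ) < ∑ y ∈ t, margY p y := by rw [hwsum]; norm_num
  have hmem := Finset.centerMass_mem_convexHull (s := {q | ∃ y, 0 < margY p y ∧ q = condY p y})
    t (fun y _ => margY_nonneg p hp y) hws
    (z := fun y => condY p y) (fun y hy => ⟨y, (Finset.mem_filter.1 hy).2, rfl⟩)
  have hcm : t.centerMass (margY p) (fun y => condY p y) = margZ p := by
    rw [Finset.centerMass, hwsum, inv_one, one_smul]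
    funext z
    rw [Finset.sum_apply]
    have hterm : ∀ y ∈ t, (margY p y • condY p y) z = margYZ p y z := by
      intro y hy
      have hy' := (Finset.mem_filter.1 hy).2
      simp only [Pi.smul_apply, smul_eq_mul, condY]
      field_simp
    rw [Finset.sum_congr rfl hterm, margZ_eq_sumY p]
    apply Finset.sum_subset (Finset.subset_univ t)
    intro y _ hyt
    have hy0 : margY p y = 0 := by
      by_contra h
      exact hyt (Finset.mem_filter.2 ⟨Finset.mem_univ y,
        lt_of_le_of_ne (margY_nonneg p hp y) (Ne.symm h)⟩)
    exact margYZ_eq_zero p hp hy0 z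
  rw [← hcm]; exact hmem

omit hp in
/-- Gibbs' inequality. -/
lemma klDiv_nonneg' {u v : 𝓩 → ℝ} (hu0 : ∀ z, 0 ≤ u z) (hu1 : ∑ z, u z = 1)
    (hv0 : ∀ z, 0 ≤ v z) (hv1 : ∑ z, v z ≤ 1) : (0 : EReal) ≤ klDiv u v := by
  classical
  rw [klDiv]
  split_ifs with h
  · rw [show ((0:EReal) = ((0:ℝ):EReal)) from rfl, EReal.coe_le_coe_iff]
    set s : Finset 𝓩 := Finset.univ.filter (fun z => 0 < u z) with hs
    have key : ∀ z ∈ Finset.univ, u z * Real.log (u z / v z) ≠ 0 → 0 < u z := by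
      intro z _ hne
      rcases (hu0 z).lt_or_eq with h' | h'
      · exact h'
      · exact absurd (by rw [← h']; ring) hne
    have hsum : ∑ z, u z * Real.log (u z / v z) = ∑ z ∈ s, u z * Real.log (u z / v z) :=
      (Finset.sum_filter_of_ne key).symm
    have husum : ∑ z ∈ s, u z = 1 := by
      rw [hs, Finset.sum_filter_of_ne (fun z _ h' =>
        lt_of_le_of_ne (hu0 z) (Ne.symm h')), hu1]
    have hvsum : ∑ z ∈ s, v z ≤ 1 :=
      le_trans (Finset.sum_le_sum_of_subset_of_nonneg (Finset.subset_univ s)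
        (fun z _ _ => hv0 z)) hv1
    have hterm : ∀ z ∈ s, u z - v z ≤ u z * Real.log (u z / v z) := by
      intro z hz
      have hu : 0 < u z := (Finset.mem_filter.1 hz).2
      have hv : 0 < v z := h z hu
      have hlog : Real.log (v z / u z) ≤ v z / u z - 1 :=
        Real.log_le_sub_one_of_pos (div_pos hv hu)
      have hlog2 : 1 - v z / u z ≤ Real.log (u z / v z) := by
        rw [Real.log_div hu.ne' hv.ne']
        rw [Real.log_div hv.ne' hu.ne'] at hlog
        linarith
      have := mul_le_mul_of_nonneg_left hlog2 hu.le
      calc u z - v z = u z * (1 - v z / u z) := by field_simp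
        _ ≤ u z * Real.log (u z / v z) := this
    calc (0:ℝ) ≤ ∑ z ∈ s, (u z - v z) := by
          rw [Finset.sum_sub_distrib, husum]; linarith
      _ ≤ ∑ z ∈ s, u z * Real.log (u z / v z) := Finset.sum_le_sum hterm
      _ = ∑ z, u z * Real.log (u z / v z) := hsum.symm
  · exact le_top

end Aux
section Main
set_option linter.unusedSectionVars false
variable (p : 𝓧 × 𝓨 × 𝓩 → ℝ) (hp : IsPMF p)
include hp

lemma condX_AC {x : 𝓧} (hx : 0 < margX p x) :
    ∀ z, 0 < condX p x z → 0 < margZ p z := by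
  intro z h
  have hxz : 0 < margXZ p x z := by
    by_contra hc
    have : condX p x z ≤ 0 := div_nonpos_of_nonpos_of_nonneg (not_lt.1 hc) hx.le
    exact absurd h (not_lt.2 this)
  calc (0:ℝ) < margXZ p x z := hxz
    _ ≤ ∑ x', margXZ p x' z :=
        Finset.single_le_sum (fun x' _ => margXZ_nonneg p hp x' z) (Finset.mem_univ x)
    _ = margZ p z := (margZ_eq_sumX p z).symm

lemma klDiv_condX_margZ {x : 𝓧} (hx : 0 < margX p x) :
    klDiv (condX p x) (margZ p)
      = ((∑ z, condX p x z * Real.log (condX p x z / margZ p z) : ℝ) : EReal) :=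
  if_pos (condX_AC p hp hx)

lemma key_term {x : 𝓧} (hx : 0 < margX p x) :
    margX p x * ∑ z, condX p x z * Real.log (condX p x z / margZ p z)
      = ∑ z, margXZ p x z * Real.log (margXZ p x z / (margX p x * margZ p z)) := by
  rw [Finset.mul_sum]
  apply Finset.sum_congr rfl
  intro z _
  simp only [condX]
  rw [div_div]
  have h1 : margX p x * (margXZ p x z / margX p x) = margXZ p x z := by field_simp
  rw [← mul_assoc, h1]

lemma miZX_eq : miZX p = ∑ x, (if 0 < margX p x then
    margX p x * (klDiv (condX p x) (margZ p)).toReal else 0) := by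
  unfold miZX
  apply Finset.sum_congr rfl
  intro x _
  by_cases hx : 0 < margX p x
  · rw [if_pos hx, klDiv_condX_margZ p hp hx, EReal.toReal_coe, key_term p hp hx]
  · rw [if_neg hx]
    have hx0 : margX p x = 0 := le_antisymm (not_lt.1 hx) (margX_nonneg p hp x)
    exact Finset.sum_eq_zero fun z _ => by rw [margXZ_eq_zero p hp hx0 z, zero_mul]

lemma iInf_bounds {x : 𝓧} (hx : 0 < margX p x) :
    0 ≤ (⨅ q ∈ CYhull p, klDiv (condX p x) q).toReal ∧
      (⨅ q ∈ CYhull p, klDiv (condX p x) q).toReal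
        ≤ (klDiv (condX p x) (margZ p)).toReal := by
  set I : EReal := ⨅ q ∈ CYhull p, klDiv (condX p x) q with hI
  have hIle : I ≤ klDiv (condX p x) (margZ p) := iInf₂_le (margZ p) (margZ_mem_CYhull p hp)
  have hcx := condX_mem_simplex p hp hx
  have hI0 : (0 : EReal) ≤ I := by
    apply le_iInf₂
    intro q hq
    have hqs := CYhull_subset_simplex p hp hq
    exact klDiv_nonneg' hcx.1 hcx.2 hqs.1 hqs.2.le
  have hne : klDiv (condX p x) (margZ p) ≠ ⊤ := by
    rw [klDiv_condX_margZ p hp hx]; exact EReal.coe_ne_top _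
  have hItop : I ≠ ⊤ := ne_top_of_le_ne_top hne hIle
  have hIbot : I ≠ ⊥ := by
    intro hb
    rw [hb] at hI0
    exact absurd hI0 (by simp)
  constructor
  · have := EReal.toReal_le_toReal hI0 (by simp) hItop
    simpa using this
  · exact EReal.toReal_le_toReal hIle hIbot hne

end Main

/-- Projected information is non-negative and bounded by the mutual information:
`0 ≤ I_pr(X↘Y;Z) ≤ I(Z;X)` (a finite real number), and
`I_pr(X↘Y;Z) = I(Z;X) − Σ_{x : p(x)>0} p(x) · inf_{q ∈ C_Y} D(p(·|x)‖q)`. -/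
theorem projected_information_nonneg_le_mi
    [Nonempty 𝓧] [Nonempty 𝓨] [Nonempty 𝓩]
    (p : 𝓧 × 𝓨 × 𝓩 → ℝ) (hp : IsPMF p) :
    0 ≤ IprXY p ∧ IprXY p ≤ miZX p ∧
      IprXY p = miZX p -
        ∑ x, (if 0 < margX p x then
            margX p x * (⨅ q ∈ CYhull p, klDiv (condX p x) q).toReal
          else 0) := by
  refine ⟨?_, ?_, ?_⟩
  · rw [IprXY]
    apply Finset.sum_nonneg
    intro x _
    split_ifs with hx
    · exact mul_nonneg (margX_nonneg p hp x)
        (sub_nonneg.2 (iInf_bounds p hp hx).2)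
    · exact le_refl 0
  · rw [miZX_eq p hp, IprXY]
    apply Finset.sum_le_sum
    intro x _
    split_ifs with hx
    · exact mul_le_mul_of_nonneg_left (sub_le_self _ (iInf_bounds p hp hx).1)
        (margX_nonneg p hp x)
    · exact le_refl 0
  · rw [miZX_eq p hp, IprXY, ← Finset.sum_sub_distrib]
    apply Finset.sum_congr rfl
    intro x _
    by_cases hx : 0 < margX p x
    · simp only [if_pos hx, mul_sub]
    · simp only [if_neg hx, sub_zero]
end

section
/- Vanishing state-dependent transfer entropy under conditional independence: if p(z|x,y) = p(z|y) for all (x,y) with p(x,y) > 0, then I_pr(X↘Y;Z) = I(Z;X), and the synergistic partial information vanishes: I(Z;X,Y) − I(Z;X) − I(Z;Y) + I_red(Z;X,Y) = 0. -/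
open scoped BigOperators

variable {𝓧 𝓨 𝓩 : Type*} [Fintype 𝓧] [Fintype 𝓨] [Fintype 𝓩]

/-! Under conditional independence, `X − Y − Z` is a Markov chain: `p(x,y,z) p(y) = p(x,y) p(y,z)`.
Then each `p(·|x)` is the mixture `Σ_y p(y|x) p(·|y)`, so it lies in `C_Y` and its projection
onto `C_Y` costs nothing: `I_pr(X↘Y;Z) = I(Z;X)`. Likewise `p(z|x,y) = p(z|y)` gives
`I(Z;X,Y) = I(Z;Y)`. Finally, for each `y` the infimum over `C_X` is at most the
`p(x|y)`-average of `D(p(·|y)‖p(·|x))`, and averaging `D(p(·|y)‖p_Z) − D(p(·|y)‖p(·|x))` over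
`p(x,y)` gives exactly `I(Z;X)`; hence `I_pr(Y↘X;Z) ≥ I(Z;X)`, `I_red = I(Z;X)`, and the
synergy cancels. -/

open Finset Real

section KullbackLeibler

variable {α : Type*} [Fintype α]

noncomputable def klSum (u v : α → ℝ) : ℝ := ∑ a, u a * log (u a / v a)

theorem klDiv_eq_klSum {u v : α → ℝ} (h : ∀ a, 0 < u a → 0 < v a) :
    klDiv u v = klSum u v :=
  if_pos h

theorem klDiv_self (u : α → ℝ) : klDiv u u = 0 := by
  rw [klDiv_eq_klSum fun _ h => h, klSum, EReal.coe_eq_zero]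
  refine sum_eq_zero fun a _ => ?_
  rcases eq_or_ne (u a) 0 with h | h <;> simp [h]

theorem klDiv_nonneg {u v : α → ℝ} (hu : IsPMF u) (hv : ∀ a, 0 ≤ v a) (hv1 : ∑ a, v a ≤ 1) :
    0 ≤ klDiv u v := by
  unfold klDiv
  split_ifs with hac
  · have hterm : ∀ a, u a - v a ≤ u a * log (u a / v a) := by
      intro a
      rcases (hu.1 a).eq_or_lt with h | h
      · simp [← h, hv a]
      have := mul_le_mul_of_nonneg_left (one_sub_inv_le_log_of_pos (div_pos h (hac a h))) h.le
      rwa [inv_div, mul_sub, mul_one, mul_div_cancel₀ _ h.ne'] at this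
    have : (0 : ℝ) ≤ ∑ a, (u a - v a) := by rw [sum_sub_distrib, hu.2]; linarith
    exact EReal.coe_nonneg.2 (this.trans (sum_le_sum fun a _ => hterm a))
  · exact le_top

theorem iInf_klDiv_eq_zero_of_mem {S : Set (α → ℝ)} (hS : S ⊆ stdSimplex ℝ α) {u : α → ℝ}
    (hu : u ∈ S) : ⨅ q ∈ S, klDiv u q = 0 :=
  le_antisymm ((iInf₂_le u hu).trans (klDiv_self u).le) <|
    le_iInf₂ fun _ hq => klDiv_nonneg (hS hu) (hS hq).1 (hS hq).2.le

theorem toReal_iInf_klDiv_le {S : Set (α → ℝ)} (hS : S ⊆ stdSimplex ℝ α) {u q : α → ℝ}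
    (hu : IsPMF u) (hq : q ∈ S) (hac : ∀ a, 0 < u a → 0 < q a) :
    (⨅ q ∈ S, klDiv u q).toReal ≤ klSum u q := by
  have hle : ⨅ q ∈ S, klDiv u q ≤ klSum u q := klDiv_eq_klSum hac ▸ iInf₂_le q hq
  have hnonneg : 0 ≤ ⨅ q ∈ S, klDiv u q :=
    le_iInf₂ fun _ hq => klDiv_nonneg hu (hS hq).1 (hS hq).2.le
  simpa using EReal.toReal_le_toReal hle (ne_bot_of_le_ne_bot (by simp) hnonneg)
    (EReal.coe_ne_top _)

theorem mul_klSum_div {c : ℝ} (hc : c ≠ 0) (f g : α → ℝ) :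
    c * klSum (fun a => f a / c) g = ∑ a, f a * log (f a / (c * g a)) := by
  rw [klSum, mul_sum]
  refine sum_congr rfl fun a _ => ?_
  rw [← mul_assoc, mul_div_cancel₀ _ hc, div_div]

end KullbackLeibler

section Marginals

variable {X Y Z : Type*} {p : X × Y × Z → ℝ}

theorem margX_nonneg_s13 [Fintype Y] [Fintype Z] (h0 : ∀ a, 0 ≤ p a) (x : X) : 0 ≤ margX p x :=
  sum_nonneg fun _ _ => sum_nonneg fun _ _ => h0 _

theorem margY_nonneg_s13 [Fintype X] [Fintype Z] (h0 : ∀ a, 0 ≤ p a) (y : Y) : 0 ≤ margY p y :=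
  sum_nonneg fun _ _ => sum_nonneg fun _ _ => h0 _

theorem margXY_nonneg [Fintype Z] (h0 : ∀ a, 0 ≤ p a) (x : X) (y : Y) : 0 ≤ margXY p x y :=
  sum_nonneg fun _ _ => h0 _

theorem margXZ_nonneg_s13 [Fintype Y] (h0 : ∀ a, 0 ≤ p a) (x : X) (z : Z) : 0 ≤ margXZ p x z :=
  sum_nonneg fun _ _ => h0 _

theorem margYZ_nonneg_s13 [Fintype X] (h0 : ∀ a, 0 ≤ p a) (y : Y) (z : Z) : 0 ≤ margYZ p y z :=
  sum_nonneg fun _ _ => h0 _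

theorem p_le_margXY [Fintype Z] (h0 : ∀ a, 0 ≤ p a) (x : X) (y : Y) (z : Z) :
    p (x, y, z) ≤ margXY p x y :=
  single_le_sum (f := fun z => p (x, y, z)) (fun _ _ => h0 _) (mem_univ z)

theorem p_le_margXZ [Fintype Y] (h0 : ∀ a, 0 ≤ p a) (x : X) (y : Y) (z : Z) :
    p (x, y, z) ≤ margXZ p x z :=
  single_le_sum (f := fun y => p (x, y, z)) (fun _ _ => h0 _) (mem_univ y)

theorem p_le_margYZ [Fintype X] (h0 : ∀ a, 0 ≤ p a) (x : X) (y : Y) (z : Z) :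
    p (x, y, z) ≤ margYZ p y z :=
  single_le_sum (f := fun x => p (x, y, z)) (fun _ _ => h0 _) (mem_univ x)

theorem margXY_le_margY [Fintype X] [Fintype Z] (h0 : ∀ a, 0 ≤ p a) (x : X) (y : Y) :
    margXY p x y ≤ margY p y :=
  single_le_sum (f := fun x => margXY p x y) (fun _ _ => margXY_nonneg h0 _ _) (mem_univ x)

theorem margXY_le_margX [Fintype Y] [Fintype Z] (h0 : ∀ a, 0 ≤ p a) (x : X) (y : Y) :
    margXY p x y ≤ margX p x :=
  single_le_sum (f := fun y => margXY p x y) (fun _ _ => margXY_nonneg h0 _ _) (mem_univ y)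

theorem margXZ_le_margX [Fintype Y] [Fintype Z] (h0 : ∀ a, 0 ≤ p a) (x : X) (z : Z) :
    margXZ p x z ≤ margX p x :=
  sum_le_sum fun y _ => p_le_margXY h0 x y z

theorem margXZ_le_margZ [Fintype X] [Fintype Y] (h0 : ∀ a, 0 ≤ p a) (x : X) (z : Z) :
    margXZ p x z ≤ margZ p z :=
  single_le_sum (f := fun x => margXZ p x z) (fun _ _ => margXZ_nonneg_s13 h0 _ _) (mem_univ x)

theorem margYZ_le_margY [Fintype X] [Fintype Z] (h0 : ∀ a, 0 ≤ p a) (y : Y) (z : Z) :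
    margYZ p y z ≤ margY p y :=
  sum_le_sum fun x _ => p_le_margXY h0 x y z

theorem margYZ_le_margZ [Fintype X] [Fintype Y] (h0 : ∀ a, 0 ≤ p a) (y : Y) (z : Z) :
    margYZ p y z ≤ margZ p z :=
  sum_le_sum fun x _ => p_le_margXZ h0 x y z

theorem isPMF_condX [Fintype Y] [Fintype Z] (h0 : ∀ a, 0 ≤ p a) {x : X} (hx : 0 < margX p x) :
    IsPMF (condX p x) := by
  refine ⟨fun z => div_nonneg (margXZ_nonneg_s13 h0 x z) hx.le, ?_⟩
  unfold condX
  rw [← sum_div, show ∑ z, margXZ p x z = margX p x from sum_comm, div_self hx.ne']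

theorem isPMF_condY [Fintype X] [Fintype Z] (h0 : ∀ a, 0 ≤ p a) {y : Y} (hy : 0 < margY p y) :
    IsPMF (condY p y) := by
  refine ⟨fun z => div_nonneg (margYZ_nonneg_s13 h0 y z) hy.le, ?_⟩
  unfold condY
  rw [← sum_div, show ∑ z, margYZ p y z = margY p y from sum_comm, div_self hy.ne']

theorem CXhull_subset_stdSimplex [Fintype Y] [Fintype Z] (h0 : ∀ a, 0 ≤ p a) :
    CXhull p ⊆ stdSimplex ℝ Z :=
  convexHull_min (by rintro _ ⟨x, hx, rfl⟩; exact isPMF_condX h0 hx) (convex_stdSimplex ℝ Z)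

theorem CYhull_subset_stdSimplex [Fintype X] [Fintype Z] (h0 : ∀ a, 0 ≤ p a) :
    CYhull p ⊆ stdSimplex ℝ Z :=
  convexHull_min (by rintro _ ⟨y, hy, rfl⟩; exact isPMF_condY h0 hy) (convex_stdSimplex ℝ Z)

theorem margXZ_pos_of_condX_pos [Fintype Y] [Fintype Z] (h0 : ∀ a, 0 ≤ p a) {x : X} {z : Z}
    (h : 0 < condX p x z) : 0 < margXZ p x z :=
  lt_of_not_ge fun h' => (div_nonpos_of_nonpos_of_nonneg h' (margX_nonneg_s13 h0 x)).not_gt h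

theorem margYZ_pos_of_condY_pos [Fintype X] [Fintype Z] (h0 : ∀ a, 0 ≤ p a) {y : Y} {z : Z}
    (h : 0 < condY p y z) : 0 < margYZ p y z :=
  lt_of_not_ge fun h' => (div_nonpos_of_nonpos_of_nonneg h' (margY_nonneg_s13 h0 y)).not_gt h

theorem klDiv_condX_margZ_s13 [Fintype X] [Fintype Y] [Fintype Z] (h0 : ∀ a, 0 ≤ p a) (x : X) :
    klDiv (condX p x) (margZ p) = klSum (condX p x) (margZ p) :=
  klDiv_eq_klSum fun z hz => (margXZ_pos_of_condX_pos h0 hz).trans_le (margXZ_le_margZ h0 x z)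

theorem klDiv_condY_margZ [Fintype X] [Fintype Y] [Fintype Z] (h0 : ∀ a, 0 ≤ p a) (y : Y) :
    klDiv (condY p y) (margZ p) = klSum (condY p y) (margZ p) :=
  klDiv_eq_klSum fun z hz => (margYZ_pos_of_condY_pos h0 hz).trans_le (margYZ_le_margZ h0 y z)

theorem miZXY_eq_miZY_of_condXY_eq_condY [Fintype X] [Fintype Y] [Fintype Z]
    (h0 : ∀ a, 0 ≤ p a) (hci : ∀ x y, 0 < margXY p x y → ∀ z, condXY p x y z = condY p y z) :
    miZXY p = miZY p := by
  rw [miZXY, sum_comm]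
  refine sum_congr rfl fun y _ => ?_
  calc ∑ x, ∑ z, p (x, y, z) * log (p (x, y, z) / (margXY p x y * margZ p z))
      = ∑ x, ∑ z, p (x, y, z) * log (margYZ p y z / (margY p y * margZ p z)) := by
        refine sum_congr rfl fun x _ => sum_congr rfl fun z _ => ?_
        rcases (h0 (x, y, z)).eq_or_lt with hp | hp
        · rw [← hp, zero_mul, zero_mul]
        rw [← div_div, ← div_div]
        exact congrArg (fun r => p (x, y, z) * log (r / margZ p z))
          (hci x y (hp.trans_le (p_le_margXY h0 x y z)) z)
    _ = ∑ z, margYZ p y z * log (margYZ p y z / (margY p y * margZ p z)) := by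
        rw [sum_comm]
        exact sum_congr rfl fun z _ => (sum_mul _ _ _).symm

end Marginals

section MarkovChain

variable {X Y Z : Type*} [Fintype X] [Fintype Z] {p : X × Y × Z → ℝ}

def IsMarkovChain (p : X × Y × Z → ℝ) : Prop :=
  ∀ x y z, p (x, y, z) * margY p y = margXY p x y * margYZ p y z

theorem isMarkovChain_of_condXY_eq_condY (h0 : ∀ a, 0 ≤ p a)
    (hci : ∀ x y, 0 < margXY p x y → ∀ z, condXY p x y z = condY p y z) : IsMarkovChain p := by
  intro x y z
  rcases (margXY_nonneg h0 x y).eq_or_lt with hxy | hxy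
  · rw [← hxy, le_antisymm (hxy ▸ p_le_margXY h0 x y z) (h0 _), zero_mul, zero_mul]
  · have hy : 0 < margY p y := hxy.trans_le (margXY_le_margY h0 x y)
    have h := hci x y hxy z
    rw [condXY, condY, div_eq_div_iff hxy.ne' hy.ne'] at h
    linarith

namespace IsMarkovChain

theorem margXY_mul_condY (hM : IsMarkovChain p) (h0 : ∀ a, 0 ≤ p a) (x : X) (y : Y) (z : Z) :
    margXY p x y * condY p y z = p (x, y, z) := by
  rcases (margY_nonneg_s13 h0 y).eq_or_lt with hy | hy
  · rw [condY, ← hy, div_zero, mul_zero]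
    exact (le_antisymm (hy ▸ (p_le_margXY h0 x y z).trans (margXY_le_margY h0 x y)) (h0 _)).symm
  · rw [condY, mul_div_assoc', div_eq_iff hy.ne', hM x y z]

theorem condX_mem_CYhull [Fintype Y] (hM : IsMarkovChain p) (h0 : ∀ a, 0 ≤ p a) {x : X}
    (hx : 0 < margX p x) : condX p x ∈ CYhull p := by
  classical
  have hmix : univ.centerMass (margXY p x) (condY p) = condX p x := by
    ext z
    simp only [centerMass, Finset.sum_apply, Pi.smul_apply, smul_eq_mul, hM.margXY_mul_condY h0]
    exact inv_mul_eq_div _ _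
  rw [← hmix, ← centerMass_filter_ne_zero]
  refine centerMass_mem_convexHull _ (fun _ _ => margXY_nonneg h0 _ _) ?_ fun y hy => ?_
  · rwa [sum_filter_ne_zero]
  · have hxy := ((margXY_nonneg h0 x y).lt_of_ne' (mem_filter.1 hy).2)
    exact ⟨y, hxy.trans_le (margXY_le_margY h0 x y), rfl⟩

theorem condX_pos_of_condY_pos [Fintype Y] (hM : IsMarkovChain p) (h0 : ∀ a, 0 ≤ p a) {x : X}
    {y : Y} {z : Z} (hxy : 0 < margXY p x y) (hz : 0 < condY p y z) : 0 < condX p x z := by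
  have hp : 0 < p (x, y, z) := hM.margXY_mul_condY h0 x y z ▸ mul_pos hxy hz
  have hxz := hp.trans_le (p_le_margXZ h0 x y z)
  exact div_pos hxz (hxz.trans_le (margXZ_le_margX h0 x z))

theorem IprXY_eq_miZX [Fintype Y] (hM : IsMarkovChain p) (h0 : ∀ a, 0 ≤ p a) :
    IprXY p = miZX p := by
  refine sum_congr rfl fun x _ => ?_
  split_ifs with hx
  · rw [iInf_klDiv_eq_zero_of_mem (CYhull_subset_stdSimplex h0) (hM.condX_mem_CYhull h0 hx),
      EReal.toReal_zero, sub_zero, klDiv_condX_margZ_s13 h0, EReal.toReal_coe]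
    exact mul_klSum_div hx.ne' _ _
  · have hx0 : margX p x = 0 := le_antisymm (not_lt.1 hx) (margX_nonneg_s13 h0 x)
    refine (sum_eq_zero fun z _ => ?_).symm
    rw [le_antisymm (hx0 ▸ margXZ_le_margX h0 x z) (margXZ_nonneg_s13 h0 x z), zero_mul]

theorem miZX_eq_sum_margXY_mul_sub_klSum [Fintype Y] (hM : IsMarkovChain p)
    (h0 : ∀ a, 0 ≤ p a) :
    miZX p = ∑ y, ∑ x, margXY p x y *
      (klSum (condY p y) (margZ p) - klSum (condY p y) (condX p x)) := by
  have hterm : ∀ x y z, margXY p x y * (condY p y z * log (condY p y z / margZ p z) -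
      condY p y z * log (condY p y z / condX p x z)) =
      p (x, y, z) * log (margXZ p x z / (margX p x * margZ p z)) := by
    intro x y z
    rw [← mul_sub, ← mul_assoc, hM.margXY_mul_condY h0]
    rcases (h0 (x, y, z)).eq_or_lt with hp | hp
    · rw [← hp, zero_mul, zero_mul]
    have hxz := hp.trans_le (p_le_margXZ h0 x y z)
    have hyz := hp.trans_le (p_le_margYZ h0 x y z)
    have hx := hxz.trans_le (margXZ_le_margX h0 x z)
    have hy := hyz.trans_le (margYZ_le_margY h0 y z)
    have hz := hxz.trans_le (margXZ_le_margZ h0 x z)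
    simp only [condX, condY]
    rw [← log_div (by positivity) (by positivity)]
    congr 2
    field_simp
  calc miZX p = ∑ x, ∑ z, ∑ y, p (x, y, z) * log (margXZ p x z / (margX p x * margZ p z)) :=
        sum_congr rfl fun x _ => sum_congr rfl fun z _ => sum_mul _ _ _
    _ = ∑ x, ∑ y, ∑ z, p (x, y, z) * log (margXZ p x z / (margX p x * margZ p z)) :=
        sum_congr rfl fun x _ => sum_comm
    _ = _ := by
        rw [sum_comm]
        refine sum_congr rfl fun y _ => sum_congr rfl fun x _ => ?_
        rw [klSum, klSum, ← sum_sub_distrib, mul_sum]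
        exact sum_congr rfl fun z _ => (hterm x y z).symm

theorem miZX_le_IprYX [Fintype Y] (hM : IsMarkovChain p) (h0 : ∀ a, 0 ≤ p a) :
    miZX p ≤ IprYX p := by
  rw [hM.miZX_eq_sum_margXY_mul_sub_klSum h0, IprYX]
  refine sum_le_sum fun y _ => ?_
  split_ifs with hy
  · rw [klDiv_condY_margZ h0, EReal.toReal_coe, show margY p y = ∑ x, margXY p x y from rfl,
      sum_mul]
    refine sum_le_sum fun x _ => ?_
    rcases (margXY_nonneg h0 x y).eq_or_lt with hxy | hxy
    · rw [← hxy, zero_mul, zero_mul]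
    have hx : 0 < margX p x := hxy.trans_le (margXY_le_margX h0 x y)
    gcongr
    exact toReal_iInf_klDiv_le (CXhull_subset_stdSimplex h0) (isPMF_condY h0 hy)
      (subset_convexHull ℝ _ ⟨x, hx, rfl⟩) fun z => hM.condX_pos_of_condY_pos h0 hxy
  · have hy0 : margY p y = 0 := le_antisymm (not_lt.1 hy) (margY_nonneg_s13 h0 y)
    refine (sum_eq_zero fun x _ => ?_).le
    rw [le_antisymm (hy0 ▸ margXY_le_margY h0 x y) (margXY_nonneg h0 x y), zero_mul]

end IsMarkovChain

end MarkovChain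

theorem synergy_vanishes_of_condIndep_general
    (p : 𝓧 × 𝓨 × 𝓩 → ℝ) (hp : IsPMF p)
    (hci : ∀ x y, 0 < margXY p x y → ∀ z, condXY p x y z = condY p y z) :
    IprXY p = miZX p ∧
      miZXY p - miZX p - miZY p + Ired p = 0 := by
  have hM : IsMarkovChain p := isMarkovChain_of_condXY_eq_condY hp.1 hci
  have hXY : IprXY p = miZX p := hM.IprXY_eq_miZX hp.1
  have hred : Ired p = miZX p := by
    rw [Ired, hXY]
    exact min_eq_left (hM.miZX_le_IprYX hp.1)
  refine ⟨hXY, ?_⟩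
  rw [miZXY_eq_miZY_of_condXY_eq_condY hp.1 hci, hred]
  ring

/-- Vanishing state-dependent transfer entropy under conditional independence:
if `p(z|x,y) = p(z|y)` for all `(x,y)` with `p(x,y) > 0`, then `I_pr(X↘Y;Z) = I(Z;X)`
and the synergistic partial information vanishes:
`I(Z;X,Y) − I(Z;X) − I(Z;Y) + I_red(Z;X,Y) = 0`. -/
theorem synergy_vanishes_of_condIndep
    [Nonempty 𝓧] [Nonempty 𝓨] [Nonempty 𝓩]
    (p : 𝓧 × 𝓨 × 𝓩 → ℝ) (hp : IsPMF p)
    (hci : ∀ x y, 0 < margXY p x y → ∀ z, condXY p x y z = condY p y z) :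
    IprXY p = miZX p ∧
      miZXY p - miZX p - miZY p + Ired p = 0 :=
  synergy_vanishes_of_condIndep_general p hp hci
end
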